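/- Given 2×2 rational matrices M₁ and M₂ and a positive integer D such that the columns of the stacked 4×2 matrix [M₁; M₂] have squared norms ≤ D² and are orthogonal to each other, there exist finitely many additional 2×2 rational matrices M₃,…,M_k such that (1/D)·[M₁; M₂; …; M_k] has orthonormal columns (i.e., {Mⱼ/D} forms a superoperator). -/

import Mathlib

/-!
By orthogonality `S = M₁ᵀ M₁ + M₂ᵀ M₂` is diagonal, so `D² • 1 - S` is a diagonal matrix
with nonnegative rational entries. Each entry is a sum of four rational squares (Lagrange), and
`c ^ 2` in position `(i, i)` is `Aᵀ A` for `A = single i i c`.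
-/

open Matrix

/-- Clearing denominators reduces this to Lagrange's theorem: `r = (num * den) / den ^ 2`. -/
theorem Rat.exists_sum_four_sq_eq {r : ℚ} (hr : 0 ≤ r) :
    ∃ x : Fin 4 → ℚ, ∑ i, x i ^ 2 = r := by
  obtain ⟨a, b, c, d, habcd⟩ := Nat.sum_four_squares (r.num.toNat * r.den)
  have hden : (r.den : ℚ) ≠ 0 := by exact_mod_cast r.den_nz
  have hnum : ((r.num.toNat : ℤ) : ℚ) = r.num := by
    exact_mod_cast Int.toNat_of_nonneg (Rat.num_nonneg.mpr hr)
  refine ⟨![a / r.den, b / r.den, c / r.den, d / r.den], ?_⟩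
  have hsum : (a : ℚ) ^ 2 + b ^ 2 + c ^ 2 + d ^ 2 = r.num * r.den := by
    rw [← hnum]; exact_mod_cast habcd
  calc ∑ i, ![(a : ℚ) / r.den, b / r.den, c / r.den, d / r.den] i ^ 2
      = ((a : ℚ) ^ 2 + b ^ 2 + c ^ 2 + d ^ 2) / (r.den * r.den) := by
        simp only [Fin.sum_univ_four, Matrix.cons_val]; ring
    _ = r := by rw [hsum, mul_div_mul_right _ _ hden, Rat.num_div_den]

theorem Matrix.exists_sum_transpose_mul_self_eq_diagonal {n : Type*} [Fintype n] [DecidableEq n]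
    {d : n → ℚ} (hd : 0 ≤ d) :
    ∃ (k : ℕ) (M : Fin k → Matrix n n ℚ), ∑ j, (M j)ᵀ * M j = diagonal d := by
  choose x hx using fun i => Rat.exists_sum_four_sq_eq (hd i)
  let e := Fintype.equivFin (n × Fin 4)
  refine ⟨_, fun j => single (e.symm j).1 (e.symm j).1 (x (e.symm j).1 (e.symm j).2), ?_⟩
  rw [e.symm.sum_comp (fun p => (single p.1 p.1 (x p.1 p.2))ᵀ * single p.1 p.1 (x p.1 p.2)),
    Fintype.sum_prod_type, ← sum_single_eq_diagonal]
  refine Finset.sum_congr rfl fun i _ => ?_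
  dsimp only
  simp only [transpose_single, single_mul_single_same, ← hx i, sq]
  exact (map_sum (singleAddMonoidHom i i) (fun l => x i l * x i l) _).symm

theorem stmt18_general (M₁ M₂ : Matrix (Fin 2) (Fin 2) ℚ) (D : ℕ)
    (horth : (M₁ᵀ * M₁ + M₂ᵀ * M₂) 0 1 = 0 ∧ (M₁ᵀ * M₁ + M₂ᵀ * M₂) 1 0 = 0)
    (hnorm : (M₁ᵀ * M₁ + M₂ᵀ * M₂) 0 0 ≤ (D : ℚ) ^ 2 ∧
             (M₁ᵀ * M₁ + M₂ᵀ * M₂) 1 1 ≤ (D : ℚ) ^ 2) :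
    ∃ (k : ℕ) (M : Fin k → Matrix (Fin 2) (Fin 2) ℚ),
      M₁ᵀ * M₁ + M₂ᵀ * M₂ + ∑ j, (M j)ᵀ * M j =
        ((D : ℚ) ^ 2) • (1 : Matrix (Fin 2) (Fin 2) ℚ) := by
  set S := M₁ᵀ * M₁ + M₂ᵀ * M₂
  have hdeficit : 0 ≤ fun i => (D : ℚ) ^ 2 - S i i := by
    intro i; fin_cases i <;> simp [hnorm.1, hnorm.2]
  obtain ⟨k, M, hM⟩ := exists_sum_transpose_mul_self_eq_diagonal hdeficit
  refine ⟨k, M, ?_⟩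
  rw [hM]
  ext i j
  fin_cases i <;> fin_cases j <;> simp [horth.1, horth.2]

theorem stmt18 (M₁ M₂ : Matrix (Fin 2) (Fin 2) ℚ) (D : ℕ) (hD : 0 < D)
    (horth : (M₁ᵀ * M₁ + M₂ᵀ * M₂) 0 1 = 0 ∧ (M₁ᵀ * M₁ + M₂ᵀ * M₂) 1 0 = 0)
    (hnorm : (M₁ᵀ * M₁ + M₂ᵀ * M₂) 0 0 ≤ (D : ℚ) ^ 2 ∧
             (M₁ᵀ * M₁ + M₂ᵀ * M₂) 1 1 ≤ (D : ℚ) ^ 2) :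
    ∃ (k : ℕ) (M : Fin k → Matrix (Fin 2) (Fin 2) ℚ),
      M₁ᵀ * M₁ + M₂ᵀ * M₂ + ∑ j, (M j)ᵀ * M j =
        ((D : ℚ) ^ 2) • (1 : Matrix (Fin 2) (Fin 2) ℚ) :=
  stmt18_general M₁ M₂ D horth hnorm
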